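/- The Čech-type cosimplicial complex O_X → ⊕_i O_{X_i} → ⊕_{i<j} O_{X_i ∩ X_j} → ⋯ for the coordinate rings of the components of a normal crossings union is exact: for X = Spec W[t_1,…,t_n]/(t_1⋯t_a) with components X_i = V(t_i), the complex W[t]/(t_1⋯t_a) → ∏_i W[t]/(t_i) → ∏_{i<j} W[t]/(t_i,t_j) → ⋯ is exact. -/

import Mathlib

open MvPolynomial

variable {W : Type*} [CommRing W] (n a : ℕ) (ha : a ≤ n)

/-- The ideal `(t_i : i ∈ I)` of `R = W[t_1,…,t_n]` attached to a subset
`I ⊆ {1,…,a}` (`a ≤ n`). -/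
noncomputable def vanishingIdeal (I : Finset (Fin a)) : Ideal (MvPolynomial (Fin n) W) :=
  Ideal.span ((fun i : Fin a => X (Fin.castLE ha i)) '' (I : Set (Fin a)))

/-- The Čech-type differential (computed on representative functions): the
alternating sum of the quotient maps `R/(t_i : i∈I) → R/(t_i : i∈I')` for
`I ⊂ I'`. -/
noncomputable def cechD (k : ℕ)
    (x : {I : Finset (Fin a) // I.card = k + 1} → MvPolynomial (Fin n) W) :
    {I : Finset (Fin a) // I.card = k + 2} → MvPolynomial (Fin n) W :=
  fun I' => ∑ i ∈ I'.1.attach,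
    ((-1 : MvPolynomial (Fin n) W) ^ ((I'.1.filter (· < i.1)).card)) *
      x ⟨I'.1.erase i.1, by rw [Finset.card_erase_of_mem i.2, I'.2]; omega⟩

namespace CechAux

open Finset

/-- The simplicial coboundary operator on `W`-valued functions on finsets. -/
def Dop (g : Finset (Fin a) → W) (I : Finset (Fin a)) : W :=
  ∑ i ∈ I, (-1 : W) ^ ((I.filter (· < i)).card) * g (I.erase i)

/-- The contracting homotopy associated with a vertex `j`. -/
def hout (j : Fin a) (g : Finset (Fin a) → W) (I : Finset (Fin a)) : W :=
  if j ∈ I then 0 else (-1 : W) ^ ((I.filter (· < j)).card) * g (insert j I)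

lemma neg_one_pow_add_eq_zero {e₁ e₂ : ℕ} (h : (e₁ + e₂) % 2 = 1) :
    (-1 : W) ^ e₁ + (-1 : W) ^ e₂ = 0 := by
  rcases Nat.even_or_odd e₁ with h1 | h1
  · have h2 : Odd e₂ := by
      rw [Nat.even_iff] at h1; rw [Nat.odd_iff]; omega
    rw [h1.neg_one_pow, h2.neg_one_pow]; ring
  · have h2 : Even e₂ := by
      rw [Nat.odd_iff] at h1; rw [Nat.even_iff]; omega
    rw [h1.neg_one_pow, h2.neg_one_pow]; ring

/-- The key algebraic identity: `hout j` is a contracting homotopy for the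
simplicial coboundary `Dop`. -/
lemma homotopy (j : Fin a) (g : Finset (Fin a) → W) (I : Finset (Fin a)) :
    Dop a (hout a j g) I + hout a j (Dop a g) I = g I := by
  by_cases hj : j ∈ I
  · rw [hout, if_pos hj, add_zero, Dop]
    rw [Finset.sum_eq_single_of_mem j hj]
    · rw [hout, if_neg (by simp : j ∉ I.erase j)]
      rw [Finset.filter_erase, Finset.erase_eq_of_notMem (by simp), Finset.insert_erase hj,
        ← mul_assoc, ← pow_add]
      rw [Even.neg_one_pow ⟨_, rfl⟩, one_mul]
    · intro i hi hij
      rw [hout, if_pos (Finset.mem_erase.mpr ⟨hij.symm, hj⟩), mul_zero]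
  · rw [hout, if_neg hj]
    set p : ℕ := (I.filter (· < j)).card with hp
    have e1 : Dop a g (insert j I) = (-1 : W) ^ p * g I +
        ∑ i ∈ I, (-1 : W) ^ (((insert j I).filter (· < i)).card) * g (insert j (I.erase i)) := by
      rw [Dop, Finset.sum_insert hj]
      congr 1
      · rw [Finset.filter_insert, if_neg (lt_irrefl j), Finset.erase_insert hj]
      · refine Finset.sum_congr rfl fun i hi => ?_
        rw [Finset.erase_insert_of_ne (fun h => hj (by rw [h]; exact hi))]
    have e2 : Dop a (hout a j g) I = ∑ i ∈ I,
        (-1 : W) ^ ((I.filter (· < i)).card + ((I.erase i).filter (· < j)).card) *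
          g (insert j (I.erase i)) := by
      rw [Dop]
      refine Finset.sum_congr rfl fun i hi => ?_
      rw [hout, if_neg (fun h => hj (Finset.mem_of_mem_erase h)), ← mul_assoc, ← pow_add]
    rw [e1, e2, mul_add, ← mul_assoc, ← pow_add, Even.neg_one_pow ⟨_, rfl⟩, one_mul,
      Finset.mul_sum, ← add_assoc, add_right_comm]
    rw [add_eq_right, ← Finset.sum_add_distrib]
    refine Finset.sum_eq_zero fun i hi => ?_
    have hij : i ≠ j := fun h => hj (h ▸ hi)
    have hc' : ((insert j I).filter (· < i)).card
        = (I.filter (· < i)).card + (if j < i then 1 else 0) := by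
      by_cases hji : j < i
      · rw [Finset.filter_insert, if_pos hji, if_pos hji,
          Finset.card_insert_of_notMem (fun hmem => hj (Finset.mem_filter.mp hmem).1)]
      · rw [Finset.filter_insert, if_neg hji, if_neg hji, add_zero]
    have hpd : p = ((I.erase i).filter (· < j)).card + (if i < j then 1 else 0) := by
      rw [Finset.filter_erase]
      by_cases hij2 : i < j
      · rw [if_pos hij2, Finset.card_erase_add_one (s := I.filter (· < j)) (a := i)
          (Finset.mem_filter.mpr ⟨hi, hij2⟩)]
      · rw [if_neg hij2, Finset.erase_eq_of_notMem (s := I.filter (· < j)) (a := i)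
          (fun hmem => hij2 (Finset.mem_filter.mp hmem).2), add_zero]
    rw [← mul_assoc, ← pow_add, ← add_mul]
    rw [neg_one_pow_add_eq_zero, zero_mul]
    rcases hij.lt_or_gt with h | h
    · rw [if_pos h] at hpd
      rw [if_neg (asymm h)] at hc'
      omega
    · rw [if_neg (asymm h)] at hpd
      rw [if_pos h] at hc'
      omega

/-- The set of indices `i < a` such that the variable `t_i` does not occur in
the exponent `d`. -/
def Jset (d : Fin n →₀ ℕ) : Finset (Fin a) :=
  Finset.univ.filter (fun i => d (Fin.castLE ha i) = 0)

lemma mem_Jset {d : Fin n →₀ ℕ} {i : Fin a} :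
    i ∈ Jset n a ha d ↔ d (Fin.castLE ha i) = 0 := by simp [Jset]

/-- Membership in the ideal `(t_i : i ∈ I)`, coefficientwise. -/
lemma mem_vanishing {r : MvPolynomial (Fin n) W} {I : Finset (Fin a)} :
    r ∈ vanishingIdeal (W := W) n a ha I ↔
      ∀ d : Fin n →₀ ℕ, I ⊆ Jset n a ha d → coeff d r = 0 := by
  have himg : (fun i : Fin a => X (R := W) (Fin.castLE ha i)) '' I
      = MvPolynomial.X '' (Fin.castLE ha '' (I : Set (Fin a))) := by
    rw [Set.image_image]
  rw [_root_.vanishingIdeal, himg, mem_ideal_span_X_image]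
  constructor
  · intro h d hId
    by_contra h0
    obtain ⟨i', hi', hne⟩ := h d (mem_support_iff.mpr h0)
    obtain ⟨i, hiI, rfl⟩ := hi'
    exact hne (mem_Jset n a ha |>.mp (hId hiI))
  · intro h d hd
    by_contra hno
    push_neg at hno
    refine mem_support_iff.mp hd (h d fun i hiI => (mem_Jset n a ha).mpr ?_)
    exact hno _ ⟨i, hiI, rfl⟩

/-- The `d`-th coefficient function of a tuple of polynomials, extended by `0`
to all finsets. -/
def ext (d : Fin n →₀ ℕ) {k : ℕ}
    (x : {I : Finset (Fin a) // I.card = k} → MvPolynomial (Fin n) W)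
    (A : Finset (Fin a)) : W :=
  if h : A.card = k then coeff d (x ⟨A, h⟩) else 0

lemma coeff_cechD (k : ℕ)
    (x : {I : Finset (Fin a) // I.card = k + 1} → MvPolynomial (Fin n) W)
    (I' : {I : Finset (Fin a) // I.card = k + 2}) (d : Fin n →₀ ℕ) :
    coeff d (cechD n a k x I') = Dop a (ext n a d x) I'.1 := by
  have hC : ∀ m : ℕ, ((-1 : MvPolynomial (Fin n) W)) ^ m = C ((-1 : W) ^ m) := by
    intro m; rw [map_pow, map_neg, map_one]
  rw [cechD, coeff_sum, Dop,
    ← Finset.sum_attach I'.1 (fun b => (-1 : W) ^ ((I'.1.filter (· < b)).card)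
      * ext n a d x (I'.1.erase b))]
  refine Finset.sum_congr rfl fun i _ => ?_
  rw [hC, coeff_C_mul]
  congr 1
  rw [ext, dif_pos (by rw [Finset.card_erase_of_mem i.2, I'.2]; omega)]

/-- Restriction of a polynomial to the monomials whose exponents satisfy `p`. -/
noncomputable def restr (p : (Fin n →₀ ℕ) → Prop) [DecidablePred p]
    (f : MvPolynomial (Fin n) W) : MvPolynomial (Fin n) W :=
  ∑ e ∈ f.support.filter p, monomial e (coeff e f)

lemma coeff_restr (p : (Fin n →₀ ℕ) → Prop) [DecidablePred p]
    (f : MvPolynomial (Fin n) W) (d : Fin n →₀ ℕ) :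
    coeff d (restr n p f) = if p d then coeff d f else 0 := by
  rw [restr, coeff_sum]
  simp only [coeff_monomial]
  rw [Finset.sum_ite_eq' (f.support.filter p) d (fun e => coeff e f)]
  by_cases hpd : p d
  · by_cases hds : d ∈ f.support
    · rw [if_pos (Finset.mem_filter.mpr ⟨hds, hpd⟩), if_pos hpd]
    · rw [if_neg (fun hmem => hds (Finset.mem_filter.mp hmem).1), if_pos hpd,
        MvPolynomial.notMem_support_iff.mp hds]
  · rw [if_neg (fun hmem => hpd (Finset.mem_filter.mp hmem).2), if_neg hpd]

open Classical in
/-- The contracting homotopy, expressed on tuples of polynomials, contracting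
each exponent `d` towards the smallest index `j` with `t_j` not occurring in
`d`. -/
noncomputable def lift (m : ℕ)
    (x : {I : Finset (Fin a) // I.card = m} → MvPolynomial (Fin n) W)
    (A : Finset (Fin a)) : MvPolynomial (Fin n) W :=
  ∑ j : Fin a, if j ∈ A then 0 else
    C ((-1 : W) ^ ((A.filter (· < j)).card)) *
      restr n (fun d => (Jset n a ha d).min = (j : WithBot (Fin a)))
        (if h : (insert j A).card = m then x ⟨insert j A, h⟩ else 0)

lemma coeff_lift (m : ℕ)
    (x : {I : Finset (Fin a) // I.card = m} → MvPolynomial (Fin n) W)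
    (A : Finset (Fin a)) (d : Fin n →₀ ℕ) (hne : (Jset n a ha d).Nonempty) :
    coeff d (lift n a ha m x A) = hout a ((Jset n a ha d).min' hne) (ext n a d x) A := by
  set j₀ := (Jset n a ha d).min' hne with hj₀
  have hmin : (Jset n a ha d).min = (j₀ : WithBot (Fin a)) := (Finset.coe_min' hne).symm
  rw [lift, coeff_sum, Finset.sum_eq_single_of_mem j₀ (Finset.mem_univ _)]
  · by_cases hj : j₀ ∈ A
    · rw [if_pos hj, hout, if_pos hj, coeff_zero]
    · rw [if_neg hj, coeff_C_mul, coeff_restr, if_pos hmin, hout, if_neg hj]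
      congr 1
      rw [ext]
      split
      · rfl
      · rw [coeff_zero]
  · intro j _ hjne
    by_cases hj : j ∈ A
    · rw [if_pos hj, coeff_zero]
    · rw [if_neg hj, coeff_C_mul, coeff_restr, if_neg, mul_zero]
      intro hmin'
      exact hjne (WithBot.coe_injective (hmin'.symm.trans hmin))

lemma prod_X_eq : (∏ i : Fin a, X (R := W) (Fin.castLE ha i))
    = monomial (∑ i : Fin a, Finsupp.single (Fin.castLE ha i) 1) (1 : W) := by
  have haux : ∀ S : Finset (Fin a), (∏ i ∈ S, X (R := W) (Fin.castLE ha i))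
      = monomial (∑ i ∈ S, Finsupp.single (Fin.castLE ha i) 1) (1 : W) := by
    intro S
    induction S using Finset.induction_on with
    | empty => simp [monomial_zero']
    | insert _ _ hnot ih =>
        rw [Finset.prod_insert hnot, Finset.sum_insert hnot, ih,
          ← pow_one (X (R := W) _), X_pow_eq_monomial, monomial_mul, one_mul]
  exact haux Finset.univ

end CechAux

/-- For `X = Spec W[t_1,…,t_n]/(t_1⋯t_a)` with components
`X_i = V(t_i)`, the Čech-type cosimplicial complex
`W[t]/(t_1⋯t_a) → ∏_i W[t]/(t_i) → ∏_{i<j} W[t]/(t_i,t_j) → ⋯`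
(differentials the alternating sums of the quotient maps) is exact.  Exactness
is expressed on representatives: an element of `R/(t_i : i∈I)` is the class of
some `r : R`, and equality in the quotient means the difference lies in the
ideal. -/
theorem cech_normal_crossings_exact :
    -- injectivity of the augmentation `R/(t_1⋯t_a) → ∏_i R/(t_i)`:
    (∀ r : MvPolynomial (Fin n) W,
        (∀ I : {I : Finset (Fin a) // I.card = 0 + 1}, r ∈ vanishingIdeal (W := W) n a ha I.1) →
        r ∈ Ideal.span {∏ i : Fin a, X (R := W) (Fin.castLE ha i)}) ∧
    -- exactness at `∏_i R/(t_i)`: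
    (∀ x : {I : Finset (Fin a) // I.card = 0 + 1} → MvPolynomial (Fin n) W,
        (∀ I', cechD n a 0 x I' ∈ vanishingIdeal (W := W) n a ha I'.1) →
        ∃ r : MvPolynomial (Fin n) W, ∀ I, x I - r ∈ vanishingIdeal (W := W) n a ha I.1) ∧
    -- exactness at `∏_{|I| = k+2} R/(t_i : i∈I)` for every `k`:
    (∀ k : ℕ, ∀ x : {I : Finset (Fin a) // I.card = k + 2} → MvPolynomial (Fin n) W,
        (∀ I', cechD n a (k + 1) x I' ∈ vanishingIdeal (W := W) n a ha I'.1) →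
        ∃ y : {I : Finset (Fin a) // I.card = k + 1} → MvPolynomial (Fin n) W,
          ∀ I, x I - cechD n a k y I ∈ vanishingIdeal (W := W) n a ha I.1) := by
    classical
  refine ⟨?_, ?_, ?_⟩
  · -- injectivity of the augmentation
    intro r h
    have hsupp : ∀ d ∈ r.support, ∀ i : Fin a, d (Fin.castLE ha i) ≠ 0 := by
      intro d hd i h0
      refine mem_support_iff.mp hd ?_
      refine (CechAux.mem_vanishing n a ha).mp (h ⟨{i}, Finset.card_singleton i⟩) d ?_
      intro i' hi'
      rw [Finset.mem_singleton] at hi'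
      subst hi'
      exact (CechAux.mem_Jset n a ha).mpr h0
    rw [show ({∏ i : Fin a, X (R := W) (Fin.castLE ha i)} : Set (MvPolynomial (Fin n) W)) =
        (fun s => monomial s (1 : W)) ''
          {∑ i : Fin a, Finsupp.single (Fin.castLE ha i) 1} by
      rw [Set.image_singleton, CechAux.prod_X_eq n a ha]]
    rw [mem_ideal_span_monomial_image]
    intro d hd
    refine ⟨_, Set.mem_singleton _, ?_⟩
    refine Finsupp.le_def.mpr fun s => ?_
    rw [Finsupp.finset_sum_apply]
    by_cases hs : ∃ i : Fin a, Fin.castLE ha i = s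
    · obtain ⟨i, rfl⟩ := hs
      have h1 : (∑ i' : Fin a, Finsupp.single (Fin.castLE ha i') 1 (Fin.castLE ha i)) = 1 := by
        rw [Finset.sum_eq_single_of_mem i (Finset.mem_univ _)]
        · rw [Finsupp.single_eq_same]
        · intro b _ hbne
          exact Finsupp.single_eq_of_ne' (fun hc => hbne (Fin.castLE_injective ha hc))
      rw [h1]
      exact Nat.one_le_iff_ne_zero.mpr (hsupp d hd i)
    · push_neg at hs
      rw [Finset.sum_eq_zero fun b _ => Finsupp.single_eq_of_ne' (hs b)]
      exact Nat.zero_le _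
  · -- exactness at the first step
    intro x hx
    refine ⟨CechAux.lift n a ha 1 x ∅, fun I => ?_⟩
    rw [CechAux.mem_vanishing n a ha]
    intro d hId
    obtain ⟨i, hI1⟩ := Finset.card_eq_one.mp I.2
    have hiJ : i ∈ CechAux.Jset n a ha d :=
      hId (by rw [hI1]; exact Finset.mem_singleton_self i)
    have hne : (CechAux.Jset n a ha d).Nonempty := ⟨i, hiJ⟩
    set j₀ := (CechAux.Jset n a ha d).min' hne with hj₀def
    have hj₀J : j₀ ∈ CechAux.Jset n a ha d := Finset.min'_mem _ hne
    have hA : CechAux.Dop a (CechAux.hout a j₀ (CechAux.ext n a d x)) {i}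
        = coeff d (CechAux.lift n a ha 1 x ∅) := by
      rw [CechAux.coeff_lift n a ha 1 x ∅ d hne, CechAux.Dop, Finset.sum_singleton,
        Finset.erase_singleton, Finset.filter_singleton, if_neg (lt_irrefl i),
        Finset.card_empty, pow_zero, one_mul]
    have hB : CechAux.hout a j₀ (CechAux.Dop a (CechAux.ext n a d x)) {i} = 0 := by
      by_cases hcase : j₀ ∈ ({i} : Finset (Fin a))
      · rw [CechAux.hout, if_pos hcase]
      · have hcard : (insert j₀ ({i} : Finset (Fin a))).card = 0 + 2 := by
          rw [Finset.card_insert_of_notMem hcase, Finset.card_singleton]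
        rw [CechAux.hout, if_neg hcase,
          ← CechAux.coeff_cechD n a 0 x ⟨insert j₀ {i}, hcard⟩ d,
          (CechAux.mem_vanishing n a ha).mp (hx ⟨insert j₀ {i}, hcard⟩) d ?_, mul_zero]
        intro m hm
        rcases Finset.mem_insert.mp hm with rfl | hm'
        · exact hj₀J
        · rw [Finset.mem_singleton] at hm'; subst hm'; exact hiJ
    have hC : CechAux.ext n a d x {i} = coeff d (x I) := by
      rw [CechAux.ext, dif_pos (Finset.card_singleton i)]
      exact congrArg (coeff d) (congrArg x (Subtype.ext hI1.symm))
    have hom := CechAux.homotopy a j₀ (CechAux.ext n a d x) {i}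
    rw [coeff_sub, ← hC, ← hom, hA, hB, add_zero, sub_self]
  · -- exactness in higher degrees
    intro k x hx
    refine ⟨fun I => CechAux.lift n a ha (k + 2) x I.1, fun I => ?_⟩
    rw [CechAux.mem_vanishing n a ha]
    intro d hId
    have hne : (CechAux.Jset n a ha d).Nonempty := by
      obtain ⟨i, hi⟩ := Finset.card_pos.mp (by rw [I.2]; omega)
      exact ⟨i, hId hi⟩
    set j₀ := (CechAux.Jset n a ha d).min' hne with hj₀def
    have hj₀J : j₀ ∈ CechAux.Jset n a ha d := Finset.min'_mem _ hne
    have hcech : coeff d (cechD n a k (fun I => CechAux.lift n a ha (k + 2) x I.1) I)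
        = CechAux.Dop a (CechAux.hout a j₀ (CechAux.ext n a d x)) I.1 := by
      rw [CechAux.coeff_cechD n a k _ I d, CechAux.Dop, CechAux.Dop]
      refine Finset.sum_congr rfl fun i hi => ?_
      congr 1
      have hcard : (I.1.erase i).card = k + 1 := by
        rw [Finset.card_erase_of_mem hi, I.2]; omega
      rw [CechAux.ext, dif_pos hcard]
      exact CechAux.coeff_lift n a ha (k + 2) x (I.1.erase i) d hne
    have hB : CechAux.hout a j₀ (CechAux.Dop a (CechAux.ext n a d x)) I.1 = 0 := by
      by_cases hcase : j₀ ∈ I.1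
      · rw [CechAux.hout, if_pos hcase]
      · have hcard : (insert j₀ I.1).card = (k + 1) + 2 := by
          rw [Finset.card_insert_of_notMem hcase, I.2]
        rw [CechAux.hout, if_neg hcase,
          ← CechAux.coeff_cechD n a (k + 1) x ⟨insert j₀ I.1, hcard⟩ d,
          (CechAux.mem_vanishing n a ha).mp (hx ⟨insert j₀ I.1, hcard⟩) d ?_, mul_zero]
        intro m hm
        rcases Finset.mem_insert.mp hm with rfl | hm'
        · exact hj₀J
        · exact hId hm'
    have hC : CechAux.ext n a d x I.1 = coeff d (x I) := by
      rw [CechAux.ext, dif_pos I.2]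
    have hom := CechAux.homotopy a j₀ (CechAux.ext n a d x) I.1
    rw [coeff_sub, ← hC, ← hom, hcech, hB, add_zero, sub_self]
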